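/- Let G be a finite symmetry group for the substitution tiling system (𝒫, ω) which acts freely on 𝒫. Then the set of T' ∈ Ω_punc with trivial isotropy in R_punc ⋊ G — i.e. such that whenever x ∈ ℝ^d and g ∈ G satisfy T' + x ∈ Ω_punc and g⁻¹(T' + x) = T', then g = e and x = 0 — is dense in Ω_punc with respect to the tiling metric. (R_punc ⋊ G is essentially principal.) -/

import Mathlib

open Metric Set Pointwise

noncomputable section

/-- Points of `ℝ^d`. -/
abbrev Pt (d : ℕ) := EuclideanSpace ℝ (Fin d)

/-- A (possibly labelled) tile in `ℝ^d`: a subset of `ℝ^d` together with a label. -/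
structure Tile (d : ℕ) where
  carrier : Set (Pt d)
  label : ℕ

instance {d : ℕ} : Inhabited (Tile d) := ⟨⟨∅, 0⟩⟩

/-- Translate of a tile by a vector. -/
def Tile.translate {d : ℕ} (t : Tile d) (x : Pt d) : Tile d :=
  ⟨(fun y => y + x) '' t.carrier, t.label⟩

/-- A tile proper: homeomorphic to the closed unit ball. -/
def Tile.IsTile {d : ℕ} (t : Tile d) : Prop :=
  Nonempty (t.carrier ≃ₜ (Metric.closedBall (0 : Pt d) 1))

/-- Support of a partial tiling: the union of its tiles. -/
def psupp {d : ℕ} (P : Set (Tile d)) : Set (Pt d) := ⋃ t ∈ P, t.carrier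

/-- `tilesAt P U` = the tiles of `P` meeting `U`, written `P(U)` in the paper. -/
def tilesAt {d : ℕ} (P : Set (Tile d)) (U : Set (Pt d)) : Set (Tile d) :=
  {t ∈ P | (t.carrier ∩ U).Nonempty}

/-- Translate of a collection of tiles. -/
def translateSet {d : ℕ} (P : Set (Tile d)) (x : Pt d) : Set (Tile d) :=
  (fun t => t.translate x) '' P

/-- A partial tiling: tiles with pairwise disjoint interiors. -/
def IsPartialTiling {d : ℕ} (P : Set (Tile d)) : Prop :=
  (∀ t ∈ P, t.IsTile) ∧
  ∀ t ∈ P, ∀ t' ∈ P, t ≠ t' → interior t.carrier ∩ interior t'.carrier = ∅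

/-- A patch: a finite partial tiling. -/
def IsPatch {d : ℕ} (P : Set (Tile d)) : Prop := IsPartialTiling P ∧ P.Finite

/-- A tiling of all of `ℝ^d`. -/
def IsTilingOfSpace {d : ℕ} (P : Set (Tile d)) : Prop :=
  IsPartialTiling P ∧ psupp P = univ

/-- A substitution tiling system `(𝒫, ω)` with inflation constant `λ > 1`. -/
structure SubstSystem (d : ℕ) where
  proto : Set (Tile d)
  proto_finite : proto.Finite
  proto_nonempty : proto.Nonempty
  proto_isTile : ∀ p ∈ proto, p.IsTile
  proto_zero_mem : ∀ p ∈ proto, (0 : Pt d) ∈ interior p.carrier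
  proto_no_translate : ∀ p ∈ proto, ∀ q ∈ proto, ∀ x : Pt d,
    q = p.translate x → p = q ∧ x = 0
  lam : ℝ
  one_lt_lam : 1 < lam
  sub : Tile d → Set (Tile d)
  sub_patch : ∀ p ∈ proto, IsPatch (sub p)
  sub_proto : ∀ p ∈ proto, ∀ t ∈ sub p, ∃ q ∈ proto, ∃ x : Pt d, t = q.translate x
  sub_supp : ∀ p ∈ proto, psupp (sub p) = lam • p.carrier
  sub_translate : ∀ (t : Tile d) (x : Pt d),
    sub (t.translate x) = (fun s => s.translate (lam • x)) '' sub t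

namespace SubstSystem

variable {d : ℕ} (S : SubstSystem d)

/-- Tile-wise application of the substitution to a collection of tiles. -/
def subSet (P : Set (Tile d)) : Set (Tile d) := ⋃ t ∈ P, S.sub t

/-- Iterated substitution `ω^n` on collections of tiles. -/
def subIter (n : ℕ) (P : Set (Tile d)) : Set (Tile d) := (S.subSet)^[n] P

/-- `ω^n(t)` for a single tile `t`. -/
def omegan (n : ℕ) (t : Tile d) : Set (Tile d) := S.subIter n {t}

/-- The continuous hull `Ω`. -/
def Omega : Set (Set (Tile d)) :=
  {T | IsTilingOfSpace T ∧ ∀ P : Set (Tile d), P ⊆ T → IsPatch P →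
    ∃ n : ℕ, ∃ p ∈ S.proto, ∃ x : Pt d, P ⊆ translateSet (S.omegan n p) x}

/-- `x` is the puncture of the tile `t`, i.e. `t = p + x` for a prototile `p`. -/
def IsPuncture (t : Tile d) (x : Pt d) : Prop :=
  ∃ p ∈ S.proto, t = p.translate x

open Classical in
/-- The puncture `x(t)` of a tile `t` (chosen; unique for translates of prototiles). -/
def punc (t : Tile d) : Pt d :=
  if h : ∃ x : Pt d, S.IsPuncture t x then h.choose else 0

/-- The punctured hull (transversal) `Ω_punc`. -/
def OmegaPunc : Set (Set (Tile d)) :=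
  {T ∈ S.Omega | ∃ t ∈ T, S.IsPuncture t 0}

end SubstSystem

/-- The tiling metric. -/
def tilingDist {d : ℕ} (T T' : Set (Tile d)) : ℝ :=
  sInf ({1} ∪ {ε : ℝ | 0 < ε ∧ ∃ x x' : Pt d, ‖x‖ < ε ∧ ‖x'‖ < ε ∧
    tilesAt (translateSet T (-x)) (ball (0 : Pt d) (1 / ε)) =
      tilesAt (translateSet T' (-x')) (ball (0 : Pt d) (1 / ε))})

namespace SubstSystem

variable {d : ℕ} (S : SubstSystem d)

/-- Density of a family of tilings in `Ω_punc` w.r.t. the tiling metric. -/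
def DenseInPunc (E : Set (Set (Tile d))) : Prop :=
  ∀ T ∈ S.OmegaPunc, ∀ ε : ℝ, 0 < ε → ∃ T' ∈ E, tilingDist T T' < ε

/-- Openness of a subset of `Ω_punc` w.r.t. the tiling metric (subspace topology). -/
def OpenInPunc (E : Set (Set (Tile d))) : Prop :=
  E ⊆ S.OmegaPunc ∧ ∀ T ∈ E, ∃ ε : ℝ, 0 < ε ∧
    ∀ T' ∈ S.OmegaPunc, tilingDist T T' < ε → T' ∈ E

/-- The translational equivalence relation `R_punc` on `Ω_punc`. -/
def Rpunc : Set (Set (Tile d) × Set (Tile d)) :=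
  {TT | TT.1 ∈ S.OmegaPunc ∧ TT.2 ∈ S.OmegaPunc ∧ ∃ x : Pt d, TT.2 = translateSet TT.1 x}

/-- `Punc(n, p)`: the punctures of the tiles of `ω^n(p)`. -/
def Punc (n : ℕ) (p : Tile d) : Set (Pt d) :=
  {x | ∃ t ∈ S.omegan n p, S.IsPuncture t x}

/-- `E^n_p(x, y)`. -/
def Eset (n : ℕ) (p : Tile d) (x y : Pt d) : Set (Set (Tile d) × Set (Tile d)) :=
  {TT | ∃ T ∈ S.OmegaPunc, p ∈ T ∧
    TT.1 = translateSet (S.subIter n T) (-x) ∧ TT.2 = translateSet (S.subIter n T) (-y)}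

/-- `R_n`. -/
def Rn (n : ℕ) : Set (Set (Tile d) × Set (Tile d)) :=
  ⋃ p ∈ S.proto, ⋃ x ∈ S.Punc n p, ⋃ y ∈ S.Punc n p, S.Eset n p x y

/-- `R_AF = ∪ₙ R_n`. -/
def RAF : Set (Set (Tile d) × Set (Tile d)) := ⋃ n : ℕ, S.Rn n

/-- `U(P, t)`. -/
def Uset (P : Set (Tile d)) (t : Tile d) : Set (Set (Tile d)) :=
  {T ∈ S.OmegaPunc | translateSet P (-(S.punc t)) ⊆ T}

/-- `V(P, t₁, t₂)`. -/
def Vset (P : Set (Tile d)) (t₁ t₂ : Tile d) : Set (Set (Tile d) × Set (Tile d)) :=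
  {TT | TT.1 ∈ S.Uset P t₁ ∧ TT.2 = translateSet TT.1 (S.punc t₁ - S.punc t₂)}

/-- (A1) primitivity. -/
def Primitive : Prop :=
  ∃ N : ℕ, ∀ p ∈ S.proto, ∀ q ∈ S.proto, ∃ x : Pt d, Tile.translate q x ∈ S.omegan N p

/-- (A2) finite local complexity. -/
def FLC : Prop :=
  ∀ R : ℝ, 0 < R → ∃ Ps : Set (Set (Tile d)), Ps.Finite ∧
    ∀ P : Set (Tile d), IsPatch P → Metric.diam (psupp P) < R →
      (∃ T ∈ S.Omega, P ⊆ T) → ∃ P₀ ∈ Ps, ∃ x : Pt d, P = translateSet P₀ x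

/-- (A3) `ω : Ω → Ω` is bijective. -/
def SubBijective : Prop := Set.BijOn S.subSet S.Omega S.Omega

/-- (A4) `ω` forces its border. -/
def ForcesBorder : Prop :=
  ∃ n : ℕ, ∀ p ∈ S.proto, ∀ T ∈ S.Omega, ∀ T' ∈ S.Omega, ∀ x x' : Pt d,
    translateSet (S.omegan n p) x ⊆ T → translateSet (S.omegan n p) x' ⊆ T' →
    translateSet (tilesAt T ((fun y => y + x) '' psupp (S.omegan n p))) (-x) =
      translateSet (tilesAt T' ((fun y => y + x') '' psupp (S.omegan n p))) (-x')

/-- Prototile boundaries have box-counting dimension strictly less than `d`. -/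
def SmallBoundary : Prop :=
  ∃ c : ℝ, c < d ∧ ∃ K₀ : ℝ, ∀ p ∈ S.proto, ∀ ε : ℝ, 0 < ε →
    ∃ centers : Finset (Pt d), (centers.card : ℝ) ≤ K₀ * ε ^ (-c) ∧
      frontier p.carrier ⊆ ⋃ z ∈ centers, ball z ε

end SubstSystem

/-- A symmetry group action for `(𝒫, ω)`: `G ≤ O(d, ℝ)` acting on tiles, preserving
the prototile set and commuting with the substitution. -/
structure SymmAction {d : ℕ} (S : SubstSystem d) (G : Subgroup (Pt d ≃ₗᵢ[ℝ] Pt d)) where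
  act : G → Tile d → Tile d
  act_carrier : ∀ (g : G) (t : Tile d),
    (act g t).carrier = (g : Pt d ≃ₗᵢ[ℝ] Pt d) '' t.carrier
  act_one : ∀ t : Tile d, act 1 t = t
  act_mul : ∀ (g h : G) (t : Tile d), act (g * h) t = act g (act h t)
  act_proto : ∀ (g : G), ∀ p ∈ S.proto, act g p ∈ S.proto
  act_translate : ∀ (g : G) (t : Tile d) (x : Pt d),
    act g (t.translate x) = (act g t).translate ((g : Pt d ≃ₗᵢ[ℝ] Pt d) x)
  act_sub : ∀ (g : G), ∀ p ∈ S.proto, S.sub (act g p) = act g '' S.sub p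

/-- Action of a group element on a (partial) tiling: `gT = {gt : t ∈ T}`. -/
def SymmAction.actSet {d : ℕ} {S : SubstSystem d} {G : Subgroup (Pt d ≃ₗᵢ[ℝ] Pt d)}
    (σ : SymmAction S G) (g : G) (T : Set (Tile d)) : Set (Tile d) := σ.act g '' T

/-- `G` acts freely on the prototile set. -/
def SymmAction.FreeOnProto {d : ℕ} {S : SubstSystem d} {G : Subgroup (Pt d ≃ₗᵢ[ℝ] Pt d)}
    (σ : SymmAction S G) : Prop := ∀ g : G, ∀ p ∈ S.proto, σ.act g p = p → g = 1

/-- Composition of relations. -/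
def relComp {α : Type*} (R₁ R₂ : Set (α × α)) : Set (α × α) :=
  {q | ∃ z : α, (q.1, z) ∈ R₁ ∧ (z, q.2) ∈ R₂}

/-- Transpose (inverse) of a relation. -/
def relTrans {α : Type*} (R : Set (α × α)) : Set (α × α) := {q | (q.2, q.1) ∈ R}

end

/-!
Given `T ∈ Ω_punc` and `R`, the tiles of `T` near `ball 0 R` form a patch inside a supertile
`ω^n(p) + y`. By primitivity, some translate `t = p + c` with `0` in its interior satisfies
`t ∈ ω^M(t)`, so `Z = ⋃ⱼ ω^{jM}(t)` is a tiling of `Ω` fixed by `ω^M`, and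
`T' = ω^n(Z) + (y - λ^n c)` agrees with `T` on `ball 0 R`.
If `gZ = Z + x`, injectivity of `ω^M` on `Ω` gives `gZ = Z + λ^{-kM} x` for every `k`; for large
`k` the tiles `t` and `g t - λ^{-kM} x` of `Z` overlap around `0`, so they coincide, and freeness
of the action gives `g = 1`, `x = 0`. Trivial isotropy passes from `Z` to `ω^n(Z)`, again by
injectivity, and to its translates.
-/

namespace Tile

variable {d : ℕ}

@[simp] lemma translate_carrier (t : Tile d) (x : Pt d) :
    (t.translate x).carrier = (fun y => y + x) '' t.carrier := rfl

@[simp] lemma translate_zero (t : Tile d) : t.translate 0 = t := by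
  cases t; simp [translate]

lemma translate_translate (t : Tile d) (x y : Pt d) :
    (t.translate x).translate y = t.translate (x + y) := by
  cases t; simp only [translate, image_image, add_assoc]

lemma translate_left_injective (x : Pt d) : Function.Injective fun t : Tile d => t.translate x :=
  fun s t h => by simpa [translate_translate] using congrArg (·.translate (-x)) h

lemma interior_translate_carrier (t : Tile d) (x : Pt d) :
    interior (t.translate x).carrier = (fun y => y + x) '' interior t.carrier :=
  ((Homeomorph.addRight x).image_interior t.carrier).symm

lemma ball_subset_interior_translate {t : Tile d} {r : ℝ} (hr : ball 0 r ⊆ interior t.carrier)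
    (x : Pt d) : ball x r ⊆ interior (t.translate x).carrier := by
  intro v hv
  rw [interior_translate_carrier]
  exact ⟨v - x, hr (by simpa [dist_eq_norm] using hv), sub_add_cancel v x⟩

lemma IsTile.of_carrier_eq_image {s t : Tile d} (ht : t.IsTile) (e : Pt d ≃ₜ Pt d)
    (h : s.carrier = e '' t.carrier) : s.IsTile := by
  obtain ⟨f⟩ := ht
  exact ⟨(Homeomorph.setCongr h).trans ((e.image t.carrier).symm.trans f)⟩

lemma IsTile.isCompact {t : Tile d} (ht : t.IsTile) : IsCompact t.carrier := by
  obtain ⟨f⟩ := ht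
  have := isCompact_iff_compactSpace.1 (isCompact_closedBall (0 : Pt d) 1)
  exact isCompact_iff_compactSpace.2 f.symm.compactSpace

end Tile

section PartialTiling

variable {d : ℕ} {P W : Set (Tile d)}

lemma psupp_image (f : Tile d → Tile d) (e : Pt d → Pt d)
    (hf : ∀ t, (f t).carrier = e '' t.carrier) : psupp (f '' P) = e '' psupp P := by
  simp only [psupp, biUnion_image, hf, image_iUnion₂]

lemma psupp_iUnion {ι : Sort*} (f : ι → Set (Tile d)) :
    psupp (⋃ i, f i) = ⋃ i, psupp (f i) := by
  simp only [psupp, biUnion_iUnion]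

lemma IsPartialTiling.mono (hW : IsPartialTiling W) (hP : P ⊆ W) : IsPartialTiling P :=
  ⟨fun t ht => hW.1 t (hP ht), fun t ht s hs => hW.2 t (hP ht) s (hP hs)⟩

lemma IsPartialTiling.image (hP : IsPartialTiling P) (f : Tile d → Tile d) (e : Pt d ≃ₜ Pt d)
    (hf : ∀ t, (f t).carrier = e '' t.carrier) : IsPartialTiling (f '' P) := by
  refine ⟨?_, ?_⟩
  · rintro _ ⟨t, ht, rfl⟩
    exact (hP.1 t ht).of_carrier_eq_image e (hf t)
  · rintro _ ⟨t, ht, rfl⟩ _ ⟨s, hs, rfl⟩ hne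
    rw [hf, hf, ← e.image_interior, ← e.image_interior, ← image_inter e.injective,
      hP.2 t ht s hs (ne_of_apply_ne f hne), image_empty]

lemma IsPartialTiling.eq_of_mem_interior (hW : IsPartialTiling W) {t s : Tile d} (ht : t ∈ W)
    (hs : s ∈ W) {v : Pt d} (hvt : v ∈ interior t.carrier) (hvs : v ∈ interior s.carrier) :
    t = s := by
  by_contra hne
  exact (hW.2 t ht s hs hne).subset ⟨hvt, hvs⟩

/-- Baire category: the interior of `t` cannot be covered by countably many other tiles. -/
lemma IsPartialTiling.mem_of_interior_subset_psupp (hW : IsPartialTiling W) (hPW : P ⊆ W)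
    (hP : P.Countable) {t : Tile d} (ht : t ∈ W) (hne : (interior t.carrier).Nonempty)
    (hsub : interior t.carrier ⊆ psupp P) : t ∈ P := by
  have := hP.to_subtype
  let f : Option P → Set (Pt d) := fun i => i.elim (interior t.carrier)ᶜ fun s => s.1.carrier
  have hclosed : ∀ i, IsClosed (f i) := by
    rintro (_ | s)
    exacts [isOpen_interior.isClosed_compl, (hW.1 s (hPW s.2)).isCompact.isClosed]
  have hcover : ⋃ i, f i = univ := by
    refine eq_univ_of_forall fun v => ?_
    by_cases hv : v ∈ interior t.carrier
    · obtain ⟨s, hs, hvs⟩ := mem_iUnion₂.1 (hsub hv)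
      exact mem_iUnion.2 ⟨some ⟨s, hs⟩, hvs⟩
    · exact mem_iUnion.2 ⟨none, hv⟩
  obtain ⟨v, hvt, hv⟩ :=
    (dense_iUnion_interior_of_closed hclosed hcover).inter_open_nonempty _ isOpen_interior hne
  obtain ⟨_ | ⟨s, hs⟩, hvs⟩ := mem_iUnion.1 hv
  · exact absurd hvt (interior_subset hvs)
  · exact hW.eq_of_mem_interior ht (hPW hs) hvt hvs ▸ hs

end PartialTiling

section Translate

variable {d : ℕ}

@[simp] lemma translateSet_zero (P : Set (Tile d)) : translateSet P 0 = P := by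
  simp [translateSet]

lemma translateSet_translateSet (P : Set (Tile d)) (x y : Pt d) :
    translateSet (translateSet P x) y = translateSet P (x + y) := by
  simp only [translateSet, image_image, Tile.translate_translate]

lemma psupp_translateSet (P : Set (Tile d)) (x : Pt d) :
    psupp (translateSet P x) = (fun y => y + x) '' psupp P :=
  psupp_image _ _ fun _ => rfl

lemma IsPartialTiling.translateSet {P : Set (Tile d)} (hP : IsPartialTiling P) (x : Pt d) :
    IsPartialTiling (translateSet P x) :=
  hP.image _ (Homeomorph.addRight x) fun _ => rfl

lemma translateSet_mono {P Q : Set (Tile d)} (h : P ⊆ Q) (x : Pt d) :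
    translateSet P x ⊆ translateSet Q x :=
  image_mono h

lemma IsPatch.translateSet {P : Set (Tile d)} (hP : IsPatch P) (x : Pt d) :
    IsPatch (translateSet P x) :=
  ⟨hP.1.translateSet x, hP.2.image _⟩

lemma translateSet_neg_subset_iff {P T : Set (Tile d)} {x : Pt d} :
    translateSet P (-x) ⊆ T ↔ P ⊆ translateSet T x := by
  constructor <;> intro h
  · simpa [translateSet_translateSet] using translateSet_mono h x
  · simpa [translateSet_translateSet] using translateSet_mono h (-x)

end Translate

namespace SubstSystem

variable {d : ℕ} (S : SubstSystem d)

def IsProtoTranslate (t : Tile d) : Prop := ∃ p ∈ S.proto, ∃ x : Pt d, t = p.translate x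

variable {S}

lemma lam_pos : 0 < S.lam := one_pos.trans S.one_lt_lam

lemma isProtoTranslate_of_mem_proto {p : Tile d} (hp : p ∈ S.proto) : S.IsProtoTranslate p :=
  ⟨p, hp, 0, p.translate_zero.symm⟩

lemma IsProtoTranslate.translate {t : Tile d} (ht : S.IsProtoTranslate t) (x : Pt d) :
    S.IsProtoTranslate (t.translate x) := by
  obtain ⟨p, hp, z, rfl⟩ := ht
  exact ⟨p, hp, z + x, p.translate_translate z x⟩

lemma IsProtoTranslate.isTile {t : Tile d} (ht : S.IsProtoTranslate t) : t.IsTile := by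
  obtain ⟨p, hp, z, rfl⟩ := ht
  exact (S.proto_isTile p hp).of_carrier_eq_image (Homeomorph.addRight z) rfl

lemma mem_interior_translate {p : Tile d} (hp : p ∈ S.proto) (x : Pt d) :
    x ∈ interior (p.translate x).carrier := by
  rw [Tile.interior_translate_carrier]
  exact ⟨0, S.proto_zero_mem p hp, zero_add x⟩

lemma translate_inj_of_mem_proto {p q : Tile d} (hp : p ∈ S.proto) (hq : q ∈ S.proto)
    {x y : Pt d} (h : p.translate x = q.translate y) : p = q ∧ x = y := by
  have hq' : q = p.translate (x - y) := by
    rw [← sub_add_cancel x y, ← p.translate_translate] at h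
    exact (Tile.translate_left_injective y h).symm
  obtain ⟨rfl, hxy⟩ := S.proto_no_translate p hp q hq _ hq'
  exact ⟨rfl, sub_eq_zero.1 hxy⟩

lemma sub_translate_eq (t : Tile d) (x : Pt d) :
    S.sub (t.translate x) = translateSet (S.sub t) (S.lam • x) :=
  S.sub_translate t x

lemma psupp_sub {t : Tile d} (ht : S.IsProtoTranslate t) :
    psupp (S.sub t) = S.lam • t.carrier := by
  obtain ⟨p, hp, z, rfl⟩ := ht
  rw [sub_translate_eq, psupp_translateSet, S.sub_supp p hp, Tile.translate_carrier,
    ← image_smul, ← image_smul, image_image, image_image]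
  simp only [smul_add]

lemma IsProtoTranslate.of_mem_sub {t s : Tile d} (ht : S.IsProtoTranslate t) (hs : s ∈ S.sub t) :
    S.IsProtoTranslate s := by
  obtain ⟨p, hp, z, rfl⟩ := ht
  rw [sub_translate_eq] at hs
  obtain ⟨u, hu, rfl⟩ := hs
  obtain ⟨q, hq, w, rfl⟩ := S.sub_proto p hp u hu
  exact ((isProtoTranslate_of_mem_proto hq).translate w).translate _

lemma IsProtoTranslate.isPartialTiling_sub {t : Tile d} (ht : S.IsProtoTranslate t) :
    IsPartialTiling (S.sub t) := by
  obtain ⟨p, hp, z, rfl⟩ := ht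
  rw [sub_translate_eq]
  exact (S.sub_patch p hp).1.translateSet _

lemma interior_subset_smul_of_mem_sub {t s : Tile d} (ht : S.IsProtoTranslate t)
    (hs : s ∈ S.sub t) : interior s.carrier ⊆ S.lam • interior t.carrier := by
  rw [← interior_smul₀ lam_pos.ne', ← psupp_sub ht]
  exact interior_mono (subset_biUnion_of_mem (u := fun t => t.carrier) hs)

lemma subSet_translateSet (P : Set (Tile d)) (x : Pt d) :
    S.subSet (translateSet P x) = translateSet (S.subSet P) (S.lam • x) := by
  simp only [subSet, translateSet, biUnion_image, image_iUnion₂]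
  exact iUnion₂_congr fun t _ => S.sub_translate t x

lemma subSet_iUnion {ι : Sort*} (f : ι → Set (Tile d)) :
    S.subSet (⋃ i, f i) = ⋃ i, S.subSet (f i) := by
  simp only [subSet, biUnion_iUnion]

lemma isProtoTranslate_of_mem_subSet {P : Set (Tile d)} (hP : ∀ t ∈ P, S.IsProtoTranslate t) :
    ∀ s ∈ S.subSet P, S.IsProtoTranslate s := by
  intro s hs
  obtain ⟨t, ht, hst⟩ := mem_iUnion₂.1 hs
  exact (hP t ht).of_mem_sub hst

lemma psupp_subSet {P : Set (Tile d)} (hP : ∀ t ∈ P, S.IsProtoTranslate t) :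
    psupp (S.subSet P) = S.lam • psupp P := by
  simp only [subSet, psupp, biUnion_iUnion, smul_set_iUnion₂]
  exact iUnion₂_congr fun t ht => psupp_sub (hP t ht)

lemma _root_.IsPartialTiling.subSet {P : Set (Tile d)} (hP : IsPartialTiling P)
    (hPT : ∀ t ∈ P, S.IsProtoTranslate t) : IsPartialTiling (S.subSet P) := by
  refine ⟨fun s hs => (isProtoTranslate_of_mem_subSet hPT s hs).isTile, ?_⟩
  intro s hs s' hs' hne
  obtain ⟨t, ht, hst⟩ := mem_iUnion₂.1 hs
  obtain ⟨t', ht', hst'⟩ := mem_iUnion₂.1 hs'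
  by_cases htt : t = t'
  · subst htt
    exact (hPT t ht).isPartialTiling_sub.2 s hst s' hst' hne
  · refine subset_empty_iff.1 ?_
    calc interior s.carrier ∩ interior s'.carrier
        ⊆ S.lam • interior t.carrier ∩ S.lam • interior t'.carrier :=
          inter_subset_inter (interior_subset_smul_of_mem_sub (hPT t ht) hst)
            (interior_subset_smul_of_mem_sub (hPT t' ht') hst')
      _ = ∅ := by rw [← smul_set_inter₀ lam_pos.ne', hP.2 t ht t' ht' htt, smul_set_empty]

lemma subIter_succ (n : ℕ) (P : Set (Tile d)) :
    S.subIter (n + 1) P = S.subSet (S.subIter n P) :=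
  Function.iterate_succ_apply' _ _ _

lemma subIter_add (m n : ℕ) (P : Set (Tile d)) :
    S.subIter (m + n) P = S.subIter m (S.subIter n P) :=
  Function.iterate_add_apply _ _ _ _

lemma subIter_mono {P Q : Set (Tile d)} (h : P ⊆ Q) (n : ℕ) :
    S.subIter n P ⊆ S.subIter n Q := by
  induction n with
  | zero => exact h
  | succ n ih =>
    rw [subIter_succ, subIter_succ]
    exact biUnion_subset_biUnion_left ih

lemma subIter_translateSet (n : ℕ) (P : Set (Tile d)) (x : Pt d) :
    S.subIter n (translateSet P x) = translateSet (S.subIter n P) (S.lam ^ n • x) := by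
  induction n with
  | zero => simp [subIter]
  | succ n ih => rw [subIter_succ, subIter_succ, ih, subSet_translateSet, smul_smul, pow_succ']

lemma subIter_iUnion {ι : Sort*} (f : ι → Set (Tile d)) (n : ℕ) :
    S.subIter n (⋃ i, f i) = ⋃ i, S.subIter n (f i) := by
  induction n with
  | zero => rfl
  | succ n ih => simp only [subIter_succ, ih, subSet_iUnion]

lemma isProtoTranslate_of_mem_subIter {P : Set (Tile d)} (hP : ∀ t ∈ P, S.IsProtoTranslate t)
    (n : ℕ) : ∀ s ∈ S.subIter n P, S.IsProtoTranslate s := by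
  induction n with
  | zero => exact hP
  | succ n ih => rw [subIter_succ]; exact isProtoTranslate_of_mem_subSet ih

lemma psupp_subIter {P : Set (Tile d)} (hP : ∀ t ∈ P, S.IsProtoTranslate t) (n : ℕ) :
    psupp (S.subIter n P) = S.lam ^ n • psupp P := by
  induction n with
  | zero => simp [subIter]
  | succ n ih =>
    rw [subIter_succ, psupp_subSet (isProtoTranslate_of_mem_subIter hP n), ih, smul_smul,
      pow_succ']

lemma _root_.IsPartialTiling.subIter {P : Set (Tile d)} (hP : IsPartialTiling P)
    (hPT : ∀ t ∈ P, S.IsProtoTranslate t) (n : ℕ) : IsPartialTiling (S.subIter n P) := by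
  induction n with
  | zero => exact hP
  | succ n ih => rw [subIter_succ]; exact ih.subSet (isProtoTranslate_of_mem_subIter hPT n)

lemma omegan_translate (n : ℕ) (t : Tile d) (x : Pt d) :
    S.omegan n (t.translate x) = translateSet (S.omegan n t) (S.lam ^ n • x) := by
  rw [omegan, omegan, ← subIter_translateSet, translateSet, image_singleton]

lemma IsProtoTranslate.isPartialTiling_omegan {t : Tile d} (ht : S.IsProtoTranslate t) (n : ℕ) :
    IsPartialTiling (S.omegan n t) := by
  refine IsPartialTiling.subIter ⟨?_, ?_⟩ (by simpa using ht) n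
  · simpa using ht.isTile
  · simp

lemma IsProtoTranslate.psupp_omegan {t : Tile d} (ht : S.IsProtoTranslate t) (n : ℕ) :
    psupp (S.omegan n t) = S.lam ^ n • t.carrier := by
  rw [omegan, psupp_subIter (by simpa using ht)]
  simp [psupp]

lemma IsProtoTranslate.of_mem_omegan {t s : Tile d} (ht : S.IsProtoTranslate t) {n : ℕ}
    (hs : s ∈ S.omegan n t) : S.IsProtoTranslate s :=
  isProtoTranslate_of_mem_subIter (by simpa using ht) n s hs

lemma isProtoTranslate_of_mem_Omega {T : Set (Tile d)} (hT : T ∈ S.Omega) {t : Tile d}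
    (ht : t ∈ T) : S.IsProtoTranslate t := by
  have hpatch : IsPatch {t} := ⟨hT.1.1.mono (singleton_subset_iff.2 ht), finite_singleton t⟩
  obtain ⟨n, p, hp, x, hsub⟩ := hT.2 {t} (singleton_subset_iff.2 ht) hpatch
  obtain ⟨s, hs, rfl⟩ := hsub rfl
  exact ((isProtoTranslate_of_mem_proto hp).of_mem_omegan hs).translate x

lemma translateSet_mem_Omega {T : Set (Tile d)} (hT : T ∈ S.Omega) (x : Pt d) :
    translateSet T x ∈ S.Omega := by
  refine ⟨⟨hT.1.1.translateSet x, ?_⟩, fun P hPT hP => ?_⟩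
  · rw [psupp_translateSet, hT.1.2]
    exact image_univ_of_surjective (Equiv.addRight x).surjective
  · obtain ⟨n, p, hp, y, hy⟩ :=
      hT.2 _ (translateSet_neg_subset_iff.2 hPT) (hP.translateSet (-x))
    refine ⟨n, p, hp, y + x, ?_⟩
    rw [← translateSet_translateSet]
    exact translateSet_neg_subset_iff.1 hy

lemma iUnion_mem_Omega {f : ℕ → Set (Tile d)} (hf : Monotone f)
    (hsuper : ∀ i, ∃ m, ∃ q ∈ S.proto, ∃ w : Pt d, f i ⊆ translateSet (S.omegan m q) w)
    (hcover : psupp (⋃ i, f i) = univ) : (⋃ i, f i) ∈ S.Omega := by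
  have hpartial : ∀ i, IsPartialTiling (f i) := fun i => by
    obtain ⟨m, q, hq, w, hi⟩ := hsuper i
    exact (((isProtoTranslate_of_mem_proto hq).isPartialTiling_omegan m).translateSet w).mono hi
  refine ⟨⟨⟨fun t ht => ?_, fun t ht s hs => ?_⟩, hcover⟩, fun P hP hPpatch => ?_⟩
  · obtain ⟨i, hi⟩ := mem_iUnion.1 ht
    exact (hpartial i).1 t hi
  · obtain ⟨i, hi⟩ := mem_iUnion.1 ht
    obtain ⟨j, hj⟩ := mem_iUnion.1 hs
    exact (hpartial (max i j)).2 t (hf (le_max_left i j) hi) s (hf (le_max_right i j) hj)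
  · obtain ⟨i, hi⟩ := hf.directed_le.exists_mem_subset_of_finset_subset_biUnion
      (s := hPpatch.2.toFinset) (by simpa using hP)
    obtain ⟨m, q, hq, w, hqi⟩ := hsuper i
    exact ⟨m, q, hq, w, (by simpa using hi : P ⊆ f i).trans hqi⟩

variable (S) in
lemma exists_proto_subset_closedBall :
    ∃ D : ℝ, 0 < D ∧ ∀ p ∈ S.proto, p.carrier ⊆ closedBall 0 D := by
  obtain ⟨D, hD, h⟩ := ((Bornology.isBounded_biUnion S.proto_finite).2
    fun p hp => (S.proto_isTile p hp).isCompact.isBounded).subset_closedBall_lt 0 0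
  exact ⟨D, hD, fun p hp => (subset_biUnion_of_mem (u := fun p => p.carrier) hp).trans h⟩

variable (S) in
lemma exists_ball_subset_interior_proto :
    ∃ r : ℝ, 0 < r ∧ ∀ p ∈ S.proto, ball 0 r ⊆ interior p.carrier := by
  obtain ⟨r, hr, h⟩ := Metric.isOpen_iff.1
    (S.proto_finite.isOpen_biInter fun _ _ => isOpen_interior) 0
    (mem_iInter₂.2 S.proto_zero_mem)
  exact ⟨r, hr, fun p hp => h.trans (biInter_subset_of_mem hp)⟩

lemma punc_translate {p : Tile d} (hp : p ∈ S.proto) (x : Pt d) : S.punc (p.translate x) = x := by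
  have hex : ∃ y, S.IsPuncture (p.translate x) y := ⟨x, p, hp, rfl⟩
  rw [punc, dif_pos hex]
  obtain ⟨q, hq, hqx⟩ := hex.choose_spec
  exact (translate_inj_of_mem_proto hq hp hqx.symm).2

lemma norm_sub_le_of_mem_translate {D : ℝ} (hD : ∀ p ∈ S.proto, p.carrier ⊆ closedBall 0 D)
    {p : Tile d} (hp : p ∈ S.proto) {x v : Pt d} (hv : v ∈ (p.translate x).carrier) :
    ‖v - x‖ ≤ D := by
  obtain ⟨w, hw, rfl⟩ := hv
  simpa using hD p hp hw

lemma _root_.IsPartialTiling.tilesAt_finite {W : Set (Tile d)} (hW : IsPartialTiling W)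
    (hPT : ∀ t ∈ W, S.IsProtoTranslate t) {K : Set (Pt d)} (hK : Bornology.IsBounded K) :
    (tilesAt W K).Finite := by
  obtain ⟨r, hr, hball⟩ := S.exists_ball_subset_interior_proto
  obtain ⟨D, -, hD⟩ := S.exists_proto_subset_closedBall
  obtain ⟨R, hR⟩ := hK.subset_closedBall 0
  obtain ⟨C, -, hCfin, hC⟩ :=
    finite_cover_balls_of_compact (isCompact_closedBall (0 : Pt d) (R + D)) (half_pos hr)
  have hcenter : ∀ t ∈ tilesAt W K, ∃ c ∈ C, dist (S.punc t) c < r / 2 := by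
    rintro t ⟨htW, v, hvt, hvK⟩
    obtain ⟨p, hp, x, rfl⟩ := hPT t htW
    have hx : x ∈ closedBall (0 : Pt d) (R + D) := by
      rw [mem_closedBall_zero_iff]
      calc ‖x‖ = ‖v - (v - x)‖ := by rw [sub_sub_cancel]
        _ ≤ ‖v‖ + ‖v - x‖ := norm_sub_le _ _
        _ ≤ R + D := add_le_add (mem_closedBall_zero_iff.1 (hR hvK))
            (norm_sub_le_of_mem_translate hD hp hvt)
    simpa [punc_translate hp] using hC hx
  choose! f hfC hf using hcenter
  refine Finite.of_injOn (f := f) (fun t ht => hfC t ht) (fun t ht s hs hts => ?_) hCfin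
  obtain ⟨p, hp, x, rfl⟩ := hPT t ht.1
  obtain ⟨q, hq, y, rfl⟩ := hPT s hs.1
  have hx := hf _ ht
  have hy := hf _ hs
  rw [punc_translate hp, hts] at hx
  rw [punc_translate hq] at hy
  refine hW.eq_of_mem_interior ht.1 hs.1 (mem_interior_translate hp x)
    (Tile.ball_subset_interior_translate (hball q hq) y ?_)
  rw [mem_ball]
  linarith [dist_triangle_right x y (f (q.translate y))]

lemma IsProtoTranslate.carrier_subset_closedBall {D : ℝ}
    (hD : ∀ p ∈ S.proto, p.carrier ⊆ closedBall 0 D) {t : Tile d} (ht : S.IsProtoTranslate t)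
    {v : Pt d} (hv : v ∈ t.carrier) : t.carrier ⊆ closedBall v (2 * D) := by
  obtain ⟨p, hp, x, rfl⟩ := ht
  intro u hu
  rw [mem_closedBall, dist_eq_norm]
  calc ‖u - v‖ = ‖(u - x) - (v - x)‖ := by rw [sub_sub_sub_cancel_right]
    _ ≤ ‖u - x‖ + ‖v - x‖ := norm_sub_le _ _
    _ ≤ 2 * D := by
      linarith [norm_sub_le_of_mem_translate hD hp hu, norm_sub_le_of_mem_translate hD hp hv]

/-- A tile of `T'` meeting `ball 0 R` is covered by tiles of `T'` taken from `T`, hence is one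
of them. -/
lemma tilesAt_ball_eq_of_subset {D : ℝ} (hD : ∀ p ∈ S.proto, p.carrier ⊆ closedBall 0 D)
    {T T' : Set (Tile d)} (hT : T ∈ S.Omega) (hT' : T' ∈ S.Omega) {R : ℝ}
    (hsub : tilesAt T (closedBall 0 (R + 2 * D)) ⊆ T') :
    tilesAt T (ball 0 R) = tilesAt T' (ball 0 R) := by
  have hD0 : 0 ≤ D := by
    obtain ⟨p, hp⟩ := S.proto_nonempty
    simpa using hD p hp (interior_subset (S.proto_zero_mem p hp))
  ext t
  constructor
  · rintro ⟨htT, hmeet⟩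
    refine ⟨hsub ⟨htT, hmeet.mono (inter_subset_inter_right _ ?_)⟩, hmeet⟩
    exact ball_subset_closedBall.trans (closedBall_subset_closedBall (by linarith))
  · rintro ⟨htT', v, hvt, hvR⟩
    refine ⟨?_, v, hvt, hvR⟩
    have hPT := isProtoTranslate_of_mem_Omega hT' htT'
    have hcar : t.carrier ⊆ closedBall 0 (R + 2 * D) :=
      (hPT.carrier_subset_closedBall hD hvt).trans (closedBall_subset_closedBall' (by
        rw [mem_ball] at hvR
        linarith))
    have hcover : interior t.carrier ⊆ psupp (tilesAt T (closedBall 0 (R + 2 * D))) := by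
      intro u hu
      have hu' : u ∈ psupp T := hT.1.2.symm ▸ mem_univ u
      obtain ⟨s, hs, hus⟩ := mem_iUnion₂.1 hu'
      exact mem_biUnion ⟨hs, u, hus, hcar (interior_subset hu)⟩ hus
    have hfin := hT.1.1.tilesAt_finite (fun s hs => isProtoTranslate_of_mem_Omega hT hs)
      (isBounded_closedBall (x := 0) (r := R + 2 * D))
    obtain ⟨p, hp, x, rfl⟩ := hPT
    exact (hT'.1.1.mem_of_interior_subset_psupp hsub hfin.countable htT'
      ⟨x, mem_interior_translate hp x⟩ hcover).1

variable (S) in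
def fixedTiling (M : ℕ) (t : Tile d) : Set (Tile d) := ⋃ j : ℕ, S.omegan (j * M) t

lemma monotone_omegan_mul {M : ℕ} {t : Tile d} (ht : t ∈ S.omegan M t) :
    Monotone fun j => S.omegan (j * M) t := by
  refine monotone_nat_of_le_succ fun j => ?_
  calc S.omegan (j * M) t ⊆ S.subIter (j * M) (S.omegan M t) :=
        subIter_mono (singleton_subset_iff.2 ht) _
    _ = S.omegan ((j + 1) * M) t := by
        rw [omegan, ← subIter_add, add_mul, one_mul]
        rfl

lemma mem_fixedTiling (M : ℕ) (t : Tile d) : t ∈ S.fixedTiling M t :=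
  mem_iUnion.2 ⟨0, by simp [omegan, subIter]⟩

lemma subIter_fixedTiling {M : ℕ} {t : Tile d} (ht : t ∈ S.omegan M t) :
    S.subIter M (S.fixedTiling M t) = S.fixedTiling M t := by
  have hstep (j : ℕ) : S.subIter M (S.omegan (j * M) t) = S.omegan ((j + 1) * M) t := by
    rw [omegan, omegan, ← subIter_add, add_mul, one_mul, add_comm]
  rw [fixedTiling, subIter_iUnion]
  simp only [hstep]
  exact (monotone_omegan_mul ht).iSup_nat_add 1

lemma fixedTiling_mem_Omega {p : Tile d} (hp : p ∈ S.proto) {M : ℕ} (hM : 0 < M) {c : Pt d}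
    (hc : p.translate c ∈ S.omegan M (p.translate c))
    (h0 : (0 : Pt d) ∈ interior (p.translate c).carrier) :
    S.fixedTiling M (p.translate c) ∈ S.Omega := by
  obtain ⟨ρ, hρ, hball⟩ := Metric.isOpen_iff.1 isOpen_interior 0 h0
  refine iUnion_mem_Omega (monotone_omegan_mul hc)
    (fun j => ⟨j * M, p, hp, _, (omegan_translate _ p c).subset⟩)
    (eq_univ_of_forall fun v => ?_)
  obtain ⟨j, hj⟩ := pow_unbounded_of_one_lt (‖v‖ / ρ) (one_lt_pow₀ S.one_lt_lam hM.ne')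
  have hpos : 0 < S.lam ^ (j * M) := pow_pos lam_pos _
  rw [psupp_iUnion, mem_iUnion]
  refine ⟨j, ?_⟩
  rw [((isProtoTranslate_of_mem_proto hp).translate c).psupp_omegan,
    mem_smul_set_iff_inv_smul_mem₀ hpos.ne']
  refine interior_subset (hball ?_)
  rw [mem_ball_zero_iff, norm_smul, norm_inv, Real.norm_of_nonneg hpos.le, inv_mul_lt_iff₀ hpos,
    pow_mul']
  rwa [div_lt_iff₀ hρ] at hj

lemma norm_le_of_mem_psupp_omegan {D : ℝ} (hD : ∀ p ∈ S.proto, p.carrier ⊆ closedBall 0 D)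
    {q : Tile d} (hq : q ∈ S.proto) {n : ℕ} {v : Pt d} (hv : v ∈ psupp (S.omegan n q)) :
    ‖v‖ ≤ S.lam ^ n * D := by
  rw [(isProtoTranslate_of_mem_proto hq).psupp_omegan] at hv
  obtain ⟨w, hw, rfl⟩ := hv
  rw [norm_smul, Real.norm_of_nonneg (pow_pos lam_pos n).le]
  exact mul_le_mul_of_nonneg_left (mem_closedBall_zero_iff.1 (hD q hq hw)) (pow_pos lam_pos n).le

/-- Primitivity puts a copy of `p` into `ω^N` of the tile of `ω^K(p)` covering `0`, at a
distance from `0` bounded independently of `K`. -/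
lemma exists_translate_mem_omegan_norm_le (hA1 : S.Primitive) {p : Tile d} (hp : p ∈ S.proto) :
    ∃ (N : ℕ) (B : ℝ), ∀ K : ℕ,
      ∃ a : Pt d, p.translate a ∈ S.omegan (N + K) p ∧ ‖a‖ ≤ B := by
  obtain ⟨N, hN⟩ := hA1
  obtain ⟨D, -, hD⟩ := S.exists_proto_subset_closedBall
  refine ⟨N, S.lam ^ N * D + S.lam ^ N * D, fun K => ?_⟩
  have h0 : (0 : Pt d) ∈ psupp (S.omegan K p) := by
    rw [(isProtoTranslate_of_mem_proto hp).psupp_omegan]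
    exact ⟨0, interior_subset (S.proto_zero_mem p hp), smul_zero _⟩
  obtain ⟨s, hs, h0s⟩ := mem_iUnion₂.1 h0
  obtain ⟨q, hq, z, rfl⟩ := (isProtoTranslate_of_mem_proto hp).of_mem_omegan hs
  obtain ⟨a, ha⟩ := hN q hq p hp
  refine ⟨a + S.lam ^ N • z, ?_, ?_⟩
  · have hsub : S.omegan N (q.translate z) ⊆ S.omegan (N + K) p :=
      calc S.omegan N (q.translate z) ⊆ S.subIter N (S.omegan K p) :=
            subIter_mono (singleton_subset_iff.2 hs) N
        _ = S.omegan (N + K) p := (subIter_add N K {p}).symm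
    apply hsub
    rw [omegan_translate, ← Tile.translate_translate]
    exact mem_image_of_mem _ ha
  · have hz : ‖z‖ ≤ D := by simpa using norm_sub_le_of_mem_translate hD hq h0s
    have ha' : ‖a‖ ≤ S.lam ^ N * D := norm_le_of_mem_psupp_omegan hD hq
      (mem_biUnion ha (interior_subset (mem_interior_translate hp a)))
    have hpos : 0 < S.lam ^ N := pow_pos lam_pos N
    calc ‖a + S.lam ^ N • z‖ ≤ ‖a‖ + ‖S.lam ^ N • z‖ := norm_add_le _ _
      _ = ‖a‖ + S.lam ^ N * ‖z‖ := by rw [norm_smul, Real.norm_of_nonneg hpos.le]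
      _ ≤ S.lam ^ N * D + S.lam ^ N * D := by gcongr

/-- `-(λ^M - 1)⁻¹ • a` is the fixed point of the affine map `v ↦ λ^M • v + a`. -/
lemma translate_mem_omegan_self {p : Tile d} {M : ℕ} {a : Pt d}
    (ha : p.translate a ∈ S.omegan M p) (hM : S.lam ^ M - 1 ≠ 0) :
    p.translate (-(S.lam ^ M - 1)⁻¹ • a) ∈
      S.omegan M (p.translate (-(S.lam ^ M - 1)⁻¹ • a)) := by
  rw [omegan_translate]
  refine ⟨p.translate a, ha, ?_⟩
  change (p.translate a).translate _ = _
  rw [Tile.translate_translate]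
  congr 1
  have hcoef : S.lam ^ M * (S.lam ^ M - 1)⁻¹ = 1 + (S.lam ^ M - 1)⁻¹ := by
    field_simp
    ring
  rw [smul_smul, mul_neg, hcoef, neg_smul, neg_smul, add_smul, one_smul]
  abel

lemma exists_translate_mem_omegan_self (hA1 : S.Primitive) {p : Tile d} (hp : p ∈ S.proto) :
    ∃ M : ℕ, 0 < M ∧ ∃ c : Pt d, (0 : Pt d) ∈ interior (p.translate c).carrier ∧
      p.translate c ∈ S.omegan M (p.translate c) := by
  obtain ⟨N, B, hB⟩ := exists_translate_mem_omegan_norm_le hA1 hp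
  obtain ⟨ρ, hρ, hball⟩ := Metric.isOpen_iff.1 isOpen_interior 0 (S.proto_zero_mem p hp)
  obtain ⟨K, hK⟩ := pow_unbounded_of_one_lt (B / ρ + 1) S.one_lt_lam
  obtain ⟨a, ha, haB⟩ := hB (K + 1)
  have hKM : S.lam ^ K ≤ S.lam ^ (N + (K + 1)) :=
    pow_le_pow_right₀ S.one_lt_lam.le (by omega)
  have hu : B < ρ * (S.lam ^ (N + (K + 1)) - 1) := by
    rw [div_add_one hρ.ne', div_lt_iff₀ hρ] at hK
    nlinarith
  have hu0 : 0 < S.lam ^ (N + (K + 1)) - 1 := by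
    nlinarith [norm_nonneg a]
  refine ⟨N + (K + 1), by omega, _, Tile.ball_subset_interior_translate hball _ ?_,
    translate_mem_omegan_self ha hu0.ne'⟩
  rw [mem_ball, dist_zero_left, norm_smul, norm_neg, norm_inv, Real.norm_of_nonneg hu0.le,
    inv_mul_lt_iff₀ hu0]
  linarith

end SubstSystem

lemma tilingDist_le_of_tilesAt_eq {d : ℕ} {T T' : Set (Tile d)} {ε : ℝ} (hε : 0 < ε)
    (h : tilesAt T (ball 0 (1 / ε)) = tilesAt T' (ball 0 (1 / ε))) : tilingDist T T' ≤ ε := by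
  refine csInf_le ⟨0, ?_⟩
    (Or.inr ⟨hε, 0, 0, by simpa using hε, by simpa using hε, by simpa using h⟩)
  rintro _ (rfl | ⟨hpos, -⟩)
  exacts [zero_le_one, hpos.le]

namespace SymmAction

variable {d : ℕ} {S : SubstSystem d} {G : Subgroup (Pt d ≃ₗᵢ[ℝ] Pt d)}
  (σ : SymmAction S G)

lemma actSet_mul (g h : G) (T : Set (Tile d)) :
    σ.actSet (g * h) T = σ.actSet g (σ.actSet h T) := by
  simp only [actSet, image_image, σ.act_mul]

@[simp] lemma actSet_one (T : Set (Tile d)) : σ.actSet 1 T = T := by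
  simp [actSet, σ.act_one]

lemma actSet_actSet_inv (g : G) (T : Set (Tile d)) : σ.actSet g (σ.actSet g⁻¹ T) = T := by
  rw [← actSet_mul, mul_inv_cancel, actSet_one]

lemma actSet_translateSet (g : G) (T : Set (Tile d)) (x : Pt d) :
    σ.actSet g (translateSet T x) =
      translateSet (σ.actSet g T) ((g : Pt d ≃ₗᵢ[ℝ] Pt d) x) := by
  simp only [actSet, translateSet, image_image, σ.act_translate]

lemma interior_act_carrier (g : G) (t : Tile d) :
    interior (σ.act g t).carrier = (g : Pt d ≃ₗᵢ[ℝ] Pt d) '' interior t.carrier := by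
  rw [σ.act_carrier]
  exact ((g : Pt d ≃ₗᵢ[ℝ] Pt d).toHomeomorph.image_interior t.carrier).symm

lemma sub_act (g : G) {t : Tile d} (ht : S.IsProtoTranslate t) :
    S.sub (σ.act g t) = σ.actSet g (S.sub t) := by
  obtain ⟨p, hp, x, rfl⟩ := ht
  rw [σ.act_translate, S.sub_translate_eq, S.sub_translate_eq, σ.act_sub g p hp,
    actSet_translateSet, LinearIsometryEquiv.map_smul]
  rfl

lemma subIter_actSet (g : G) {T : Set (Tile d)} (hT : ∀ t ∈ T, S.IsProtoTranslate t) (n : ℕ) :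
    S.subIter n (σ.actSet g T) = σ.actSet g (S.subIter n T) := by
  induction n with
  | zero => rfl
  | succ n ih =>
    rw [S.subIter_succ, S.subIter_succ, ih]
    simp only [SubstSystem.subSet, actSet, biUnion_image, image_iUnion₂]
    exact iUnion₂_congr fun t ht =>
      σ.sub_act g (SubstSystem.isProtoTranslate_of_mem_subIter hT n t ht)

lemma omegan_act (g : G) {t : Tile d} (ht : S.IsProtoTranslate t) (n : ℕ) :
    S.omegan n (σ.act g t) = σ.actSet g (S.omegan n t) := by
  rw [SubstSystem.omegan, SubstSystem.omegan, ← σ.subIter_actSet g (by simpa using ht)]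
  simp [actSet]

lemma actSet_mem_Omega (g : G) {T : Set (Tile d)} (hT : T ∈ S.Omega) :
    σ.actSet g T ∈ S.Omega := by
  have hpartial (g : G) {P : Set (Tile d)} (hP : IsPartialTiling P) :
      IsPartialTiling (σ.actSet g P) :=
    hP.image _ (g : Pt d ≃ₗᵢ[ℝ] Pt d).toHomeomorph (σ.act_carrier g)
  refine ⟨⟨hpartial g hT.1.1, ?_⟩, fun P hPT hP => ?_⟩
  · rw [actSet, psupp_image _ _ (σ.act_carrier g), hT.1.2]
    exact image_univ_of_surjective (g : Pt d ≃ₗᵢ[ℝ] Pt d).surjective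
  · have hP' : σ.actSet g⁻¹ P ⊆ T :=
      calc σ.actSet g⁻¹ P ⊆ σ.actSet g⁻¹ (σ.actSet g T) := image_mono hPT
        _ = T := by rw [← actSet_mul, inv_mul_cancel, actSet_one]
    obtain ⟨n, p, hp, x, hx⟩ :=
      hT.2 _ hP' ⟨hpartial g⁻¹ hP.1, hP.2.image _⟩
    refine ⟨n, σ.act g p, σ.act_proto g p hp, (g : Pt d ≃ₗᵢ[ℝ] Pt d) x, ?_⟩
    rw [σ.omegan_act g (SubstSystem.isProtoTranslate_of_mem_proto hp), ← actSet_translateSet,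
      ← σ.actSet_actSet_inv g P]
    exact image_mono hx

/-- Trivial isotropy of `T` in `R_punc ⋊ G`. -/
def HasTrivialIsotropy (T : Set (Tile d)) : Prop :=
  ∀ (g : G) (x : Pt d), σ.actSet g T = translateSet T x → g = 1 ∧ x = 0

variable {σ}

lemma HasTrivialIsotropy.translateSet {T : Set (Tile d)} (hT : σ.HasTrivialIsotropy T)
    (y : Pt d) : σ.HasTrivialIsotropy (translateSet T y) := by
  intro g x hx
  rw [actSet_translateSet, translateSet_translateSet] at hx
  have hgT : σ.actSet g T = _root_.translateSet T (y + x - (g : Pt d ≃ₗᵢ[ℝ] Pt d) y) := by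
    simpa [translateSet_translateSet, sub_eq_add_neg] using
      congrArg (_root_.translateSet · (-(g : Pt d ≃ₗᵢ[ℝ] Pt d) y)) hx
  obtain ⟨rfl, h0⟩ := hT g _ hgT
  simpa using h0

lemma actSet_eq_translateSet_of_subIter (hA3 : S.SubBijective) {T : Set (Tile d)}
    (hT : T ∈ S.Omega) {g : G} {x : Pt d} {n : ℕ}
    (h : σ.actSet g (S.subIter n T) = translateSet (S.subIter n T) x) :
    σ.actSet g T = translateSet T ((S.lam ^ n)⁻¹ • x) := by
  refine (hA3.iterate n).injOn (σ.actSet_mem_Omega g hT)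
    (SubstSystem.translateSet_mem_Omega hT _) ?_
  change S.subIter n _ = S.subIter n _
  rw [σ.subIter_actSet g (fun t ht => SubstSystem.isProtoTranslate_of_mem_Omega hT ht), h,
    S.subIter_translateSet, smul_inv_smul₀ (pow_ne_zero n SubstSystem.lam_pos.ne')]

lemma HasTrivialIsotropy.subIter (hA3 : S.SubBijective) {T : Set (Tile d)} (hT : T ∈ S.Omega)
    (hiso : σ.HasTrivialIsotropy T) (n : ℕ) : σ.HasTrivialIsotropy (S.subIter n T) := by
  intro g x hx
  obtain ⟨rfl, h0⟩ := hiso g _ (actSet_eq_translateSet_of_subIter hA3 hT hx)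
  exact ⟨rfl, by simpa [SubstSystem.lam_pos.ne'] using h0⟩

/-- A symmetry `gZ = Z + x` with `x` small moves a tile around `0` onto a tile around `0`,
hence fixes it; freeness then forces `g = 1`. -/
lemma eq_one_of_actSet_eq_translateSet (hfree : σ.FreeOnProto) {Z : Set (Tile d)}
    (hZ : IsPartialTiling Z) {p : Tile d} (hp : p ∈ S.proto) {c : Pt d} (hc : p.translate c ∈ Z)
    {ρ : ℝ} (hρ : ball 0 ρ ⊆ interior (p.translate c).carrier) {g : G} {x : Pt d}
    (hx : ‖x‖ < ρ) (h : σ.actSet g Z = translateSet Z x) : g = 1 ∧ x = 0 := by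
  obtain ⟨s, hs, hsx : s.translate x = σ.act g (p.translate c)⟩ :=
    (h ▸ mem_image_of_mem _ hc : σ.act g (p.translate c) ∈ translateSet Z x)
  have hs0 : (0 : Pt d) ∈ interior s.carrier := by
    have hxs : x ∈ interior (s.translate x).carrier := by
      rw [hsx, interior_act_carrier]
      exact ⟨(g : Pt d ≃ₗᵢ[ℝ] Pt d).symm x, hρ (by simpa using hx), by simp⟩
    obtain ⟨w, hw, hwx⟩ := (Tile.interior_translate_carrier s x ▸ hxs)
    rwa [add_eq_right.1 hwx] at hw
  have hsc : s = p.translate c :=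
    hZ.eq_of_mem_interior hs hc hs0 (hρ (mem_ball_self ((norm_nonneg x).trans_lt hx)))
  rw [hsc, Tile.translate_translate, σ.act_translate] at hsx
  obtain ⟨hgp, hcx⟩ := SubstSystem.translate_inj_of_mem_proto hp (σ.act_proto g p hp) hsx
  obtain rfl := hfree g p hp hgp.symm
  simpa using hcx

/-- Conjugating by `ω^M`, injective on `Ω`, divides the translation part of a symmetry by `λ^M`
until `eq_one_of_actSet_eq_translateSet` applies. -/
lemma hasTrivialIsotropy_of_subIter_eq_self (hA3 : S.SubBijective) (hfree : σ.FreeOnProto)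
    {Z : Set (Tile d)} (hZ : Z ∈ S.Omega) {M : ℕ} (hM : 0 < M) (hfix : S.subIter M Z = Z)
    {p : Tile d} (hp : p ∈ S.proto) {c : Pt d} (hc : p.translate c ∈ Z)
    (h0 : (0 : Pt d) ∈ interior (p.translate c).carrier) : σ.HasTrivialIsotropy Z := by
  intro g x hx
  obtain ⟨ρ, hρ, hball⟩ := Metric.isOpen_iff.1 isOpen_interior 0 h0
  have hshrink : ∀ k : ℕ, σ.actSet g Z = translateSet Z ((S.lam ^ M)⁻¹ ^ k • x) := by
    intro k
    induction k with
    | zero => simpa using hx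
    | succ k ih =>
      rw [← hfix] at ih
      rw [pow_succ', mul_smul, ← actSet_eq_translateSet_of_subIter hA3 hZ ih]
  have hlt : (S.lam ^ M)⁻¹ < 1 := inv_lt_one_of_one_lt₀ (one_lt_pow₀ S.one_lt_lam hM.ne')
  have hlim : Filter.Tendsto (fun k => (S.lam ^ M)⁻¹ ^ k • x) Filter.atTop (nhds 0) := by
    simpa using (tendsto_pow_atTop_nhds_zero_of_lt_one
      (inv_pos.2 (pow_pos SubstSystem.lam_pos M)).le hlt).smul_const x
  obtain ⟨k, hk⟩ := (hlim.eventually (ball_mem_nhds 0 hρ)).exists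
  obtain ⟨rfl, hk0⟩ := eq_one_of_actSet_eq_translateSet hfree hZ.1.1 hp hc hball
    (by simpa using hk) (hshrink k)
  exact ⟨rfl, by simpa [SubstSystem.lam_pos.ne'] using hk0⟩

lemma exists_hasTrivialIsotropy_tilesAt_eq (hA1 : S.Primitive) (hA3 : S.SubBijective)
    (hfree : σ.FreeOnProto) {T : Set (Tile d)} (hT : T ∈ S.OmegaPunc) {R : ℝ} (hR : 0 ≤ R) :
    ∃ T' ∈ S.OmegaPunc, σ.HasTrivialIsotropy T' ∧
      tilesAt T (ball 0 R) = tilesAt T' (ball 0 R) := by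
  obtain ⟨D, hD0, hD⟩ := S.exists_proto_subset_closedBall
  set P := tilesAt T (closedBall 0 (R + 2 * D))
  have hPT : P ⊆ T := sep_subset _ _
  have hPpatch : IsPatch P := ⟨hT.1.1.1.mono hPT, hT.1.1.1.tilesAt_finite
    (fun t ht => SubstSystem.isProtoTranslate_of_mem_Omega hT.1 ht) isBounded_closedBall⟩
  obtain ⟨n, p, hp, y, hPy⟩ := hT.1.2 P hPT hPpatch
  obtain ⟨M, hM, c, h0, hc⟩ := SubstSystem.exists_translate_mem_omegan_self hA1 hp
  set Z := S.fixedTiling M (p.translate c)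
  have hZ : Z ∈ S.Omega := SubstSystem.fixedTiling_mem_Omega hp hM hc h0
  set T' := translateSet (S.subIter n Z) (y - S.lam ^ n • c)
  have hT' : T' ∈ S.Omega :=
    SubstSystem.translateSet_mem_Omega ((hA3.iterate n).mapsTo hZ) _
  have hPT' : P ⊆ T' :=
    calc P ⊆ translateSet (S.omegan n p) y := hPy
      _ = translateSet (S.omegan n (p.translate c)) (y - S.lam ^ n • c) := by
        rw [SubstSystem.omegan_translate, translateSet_translateSet, add_sub_cancel]
      _ ⊆ T' := translateSet_mono (S.subIter_mono
        (singleton_subset_iff.2 (SubstSystem.mem_fixedTiling M _)) n) _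
  obtain ⟨t₀, ht₀, q, hq, rfl⟩ := hT.2
  refine ⟨T', ⟨hT', q.translate 0, hPT' ⟨ht₀, 0, ?_, ?_⟩, q, hq, rfl⟩, ?_,
    SubstSystem.tilesAt_ball_eq_of_subset hD hT.1 hT' hPT'⟩
  · exact interior_subset (SubstSystem.mem_interior_translate hq 0)
  · exact mem_closedBall_self (by positivity)
  · exact ((hasTrivialIsotropy_of_subIter_eq_self hA3 hfree hZ hM
      (SubstSystem.subIter_fixedTiling hc) hp (SubstSystem.mem_fixedTiling M _) h0).subIter
      hA3 hZ n).translateSet _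

end SymmAction

theorem stmt1_general {d : ℕ} (S : SubstSystem d)
    (hA1 : S.Primitive) (hA3 : S.SubBijective)
    (G : Subgroup (Pt d ≃ₗᵢ[ℝ] Pt d)) (σ : SymmAction S G)
    (hfree : σ.FreeOnProto) :
    S.DenseInPunc {T' ∈ S.OmegaPunc |
      ∀ (x : Pt d) (g : G), translateSet T' x ∈ S.OmegaPunc →
        σ.actSet g⁻¹ (translateSet T' x) = T' → g = 1 ∧ x = 0} := by
  intro T hT ε hε
  obtain ⟨T', hT', hiso, hagree⟩ :=
    SymmAction.exists_hasTrivialIsotropy_tilesAt_eq hA1 hA3 hfree hT (R := 1 / (ε / 2))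
      (by positivity)
  refine ⟨T', ⟨hT', fun x g _ hx => hiso g x ?_⟩, ?_⟩
  · simpa only [hx] using σ.actSet_actSet_inv g (translateSet T' x)
  · linarith [tilingDist_le_of_tilesAt_eq (half_pos hε) hagree]

/-- For a finite symmetry group `G` acting freely on `𝒫`, the set of
`T' ∈ Ω_punc` with trivial isotropy in `R_punc ⋊ G` is dense in `Ω_punc` for the
tiling metric (`R_punc ⋊ G` is essentially principal). -/
theorem stmt1 {d : ℕ} (hd : 1 ≤ d) (S : SubstSystem d)
    (hA1 : S.Primitive) (hA2 : S.FLC) (hA3 : S.SubBijective)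
    (G : Subgroup (Pt d ≃ₗᵢ[ℝ] Pt d)) [Finite G] (σ : SymmAction S G)
    (hfree : σ.FreeOnProto) :
    S.DenseInPunc {T' ∈ S.OmegaPunc |
      ∀ (x : Pt d) (g : G), translateSet T' x ∈ S.OmegaPunc →
        σ.actSet g⁻¹ (translateSet T' x) = T' → g = 1 ∧ x = 0} :=
  stmt1_general S hA1 hA3 G σ hfree
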